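/- Let Φ(ρ) = Σ_{i=1}^d M_i ρ M_i† be a quantum channel on a finite-dimensional Hilbert space with Kraus operators M_i, and let R be a channel satisfying R(M_i ρ M_i†) = Tr(M_i ρ M_i†) ρ for all i ≤ k, for a fixed density operator ρ. Then (1/2)‖(R∘Φ)(ρ) − ρ‖₁ ≤ ‖Σ_{i=k+1}^d M_i† M_i‖, where ‖·‖ is the operator norm. -/

import Mathlib

/-!
Split `Φ(ρ)` into the recovered part (`i < k`) and `B = Σ_{i ≥ k} M_i ρ M_iᴴ`. Perfect recovery
and `Σ M_iᴴ M_i = 1` give `(R ∘ Φ)(ρ) - ρ = R(B) - Tr(B) • ρ`, a difference of two positive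
matrices of the same trace `Tr B`, so its trace norm is at most `2 Tr B`. Finally
`Tr B = Tr(E ρ) ≤ ‖E‖` for `E = Σ_{i ≥ k} M_iᴴ M_i`, since `E ≤ ‖E‖ • 1`.
-/

open Matrix
open scoped ComplexOrder

/-- The trace norm `‖A‖₁ = Tr √(AᴴA)` of a complex matrix. -/
noncomputable def traceNorm {ι : Type*} [Fintype ι] [DecidableEq ι]
    (A : Matrix ι ι ℂ) : ℝ :=
  ((Matrix.posSemidef_conjTranspose_mul_self A).1.eigenvectorUnitary.1 *
    diagonal (((↑) : ℝ → ℂ) ∘ (√·) ∘ (Matrix.posSemidef_conjTranspose_mul_self A).1.eigenvalues) *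
    (star (Matrix.posSemidef_conjTranspose_mul_self A).1.eigenvectorUnitary :
      Matrix ι ι ℂ)).trace.re

/-- The operator (spectral) norm of a complex matrix. -/
noncomputable def opNorm {ι : Type*} [Fintype ι] [DecidableEq ι]
    (A : Matrix ι ι ℂ) : ℝ :=
  ‖Matrix.toEuclideanCLM (𝕜 := ℂ) (n := ι) A‖

open scoped MatrixOrder Matrix.Norms.L2Operator

namespace Matrix

variable {ι : Type*} [Fintype ι] [DecidableEq ι]

lemma PosSemidef.trace_mul_nonneg {A P : Matrix ι ι ℂ} (hA : A.PosSemidef) (hP : P.PosSemidef) :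
    0 ≤ (A * P).trace := by
  have hconj : 0 ≤ CFC.sqrt P * A * CFC.sqrt P :=
    conjugate_nonneg_of_nonneg hA.nonneg (CFC.sqrt_nonneg P)
  calc (0 : ℂ) ≤ (CFC.sqrt P * A * CFC.sqrt P).trace :=
        (nonneg_iff_posSemidef.mp hconj).trace_nonneg
    _ = (A * P).trace := by
      rw [trace_mul_cycle, CFC.sqrt_mul_sqrt_self P hP.nonneg, trace_mul_comm]

lemma trace_mul_le_trace_mul_of_le {A B P : Matrix ι ι ℂ} (hAB : A ≤ B) (hP : P.PosSemidef) :
    (A * P).trace ≤ (B * P).trace := by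
  rw [← sub_nonneg, ← trace_sub, ← sub_mul]
  exact PosSemidef.trace_mul_nonneg (le_iff.mp hAB) hP

lemma trace_conj_sum {α m n R : Type*} [Fintype m] [Fintype n] [CommSemiring R] [StarRing R]
    (M : α → Matrix m n R) (ρ : Matrix n n R) (s : Finset α) :
    (∑ i ∈ s, M i * ρ * (M i)ᴴ).trace = ((∑ i ∈ s, (M i)ᴴ * M i) * ρ).trace := by
  simp only [trace_sum, Finset.sum_mul]
  exact Finset.sum_congr rfl fun i _ => trace_mul_cycle (M i) ρ (M i)ᴴ

end Matrix

section TraceNorm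

variable {ι : Type*} [Fintype ι] [DecidableEq ι]

lemma traceNorm_eq_re_trace_abs (A : Matrix ι ι ℂ) : traceNorm A = (CFC.abs A).trace.re := by
  rw [CFC.abs, star_eq_conjTranspose,
    CFC.sqrt_eq_real_sqrt _ (posSemidef_conjTranspose_mul_self A).nonneg, cfcₙ_eq_cfc,
    (posSemidef_conjTranspose_mul_self A).1.cfc_eq, IsHermitian.cfc, Unitary.conjStarAlgAut_apply]
  rfl

lemma abs_eq_cfc_sign_mul {D : Matrix ι ι ℂ} (hD : IsSelfAdjoint D) :
    CFC.abs D = cfc (fun x : ℝ => (SignType.sign x : ℝ)) D * D := by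
  have hc : ContinuousOn (fun x : ℝ => (SignType.sign x : ℝ)) (spectrum ℝ D) :=
    finite_real_spectrum.continuousOn _
  calc CFC.abs D = cfc (fun x : ℝ => (SignType.sign x : ℝ) * x) D := by
        simp_rw [sign_mul_self, CFC.abs_eq_cfc_norm D, Real.norm_eq_abs]
    _ = cfc (fun x : ℝ => (SignType.sign x : ℝ)) D * D := by rw [cfc_mul _ _ D hc, cfc_id' ℝ D]

/-- Writing `|P - Q| = S (P - Q)` with `S` the sign of `P - Q`, the bounds `-1 ≤ S ≤ 1` give
`Tr (S P) ≤ Tr P` and `-Tr (S Q) ≤ Tr Q`. -/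
lemma traceNorm_sub_le {P Q : Matrix ι ι ℂ} (hP : P.PosSemidef) (hQ : Q.PosSemidef) :
    traceNorm (P - Q) ≤ P.trace.re + Q.trace.re := by
  have hD : IsSelfAdjoint (P - Q) := hP.1.sub hQ.1
  set S := cfc (fun x : ℝ => (SignType.sign x : ℝ)) (P - Q)
  have hsign (x : ℝ) : -1 ≤ (SignType.sign x : ℝ) ∧ (SignType.sign x : ℝ) ≤ 1 := by
    cases SignType.sign x <;> norm_num
  have hS_le : S ≤ 1 := cfc_le_one _ _ fun x _ => (hsign x).2
  have hS_ge : -1 ≤ S := by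
    simpa using algebraMap_le_cfc (fun x : ℝ => (SignType.sign x : ℝ)) (-1) (P - Q)
      (fun x _ => (hsign x).1) (finite_real_spectrum.continuousOn _)
  have hSP := Complex.le_def.mp (trace_mul_le_trace_mul_of_le hS_le hP)
  have hSQ := Complex.le_def.mp (trace_mul_le_trace_mul_of_le hS_ge hQ)
  rw [traceNorm_eq_re_trace_abs, abs_eq_cfc_sign_mul hD, mul_sub, trace_sub, Complex.sub_re]
  simp only [one_mul, neg_mul, trace_neg, Complex.neg_re] at hSP hSQ
  linarith [hSP.1, hSQ.1]

lemma re_trace_mul_le_opNorm {B ρ : Matrix ι ι ℂ} (hB : B.IsHermitian) (hρ : ρ.PosSemidef)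
    (hρ1 : ρ.trace = 1) : (B * ρ).trace.re ≤ opNorm B := by
  have hle : B ≤ algebraMap ℝ _ (opNorm B) := IsSelfAdjoint.le_algebraMap_norm_self hB
  have := (Complex.le_def.mp (trace_mul_le_trace_mul_of_le hle hρ)).1
  simpa [Algebra.algebraMap_eq_smul_one, hρ1] using this

end TraceNorm

lemma recover_sum_conj_sub_eq {ι α : Type*} [Fintype ι] [DecidableEq ι] [Fintype α]
    [DecidableEq α]
    (M : α → Matrix ι ι ℂ) (hKraus : ∑ i, (M i)ᴴ * M i = 1) (ρ : Matrix ι ι ℂ)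
    (hρ1 : ρ.trace = 1) (R : Matrix ι ι ℂ →ₗ[ℂ] Matrix ι ι ℂ) (S : Finset α)
    (hRec : ∀ i ∉ S, R (M i * ρ * (M i)ᴴ) = (M i * ρ * (M i)ᴴ).trace • ρ) :
    R (∑ i, M i * ρ * (M i)ᴴ) - ρ =
      R (∑ i ∈ S, M i * ρ * (M i)ᴴ) - (∑ i ∈ S, M i * ρ * (M i)ᴴ).trace • ρ := by
  have htotal : (∑ i, M i * ρ * (M i)ᴴ).trace = 1 := by
    rw [trace_conj_sum, hKraus, one_mul, hρ1]
  have hcorrected :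
      R (∑ i ∈ Sᶜ, M i * ρ * (M i)ᴴ) = (∑ i ∈ Sᶜ, M i * ρ * (M i)ᴴ).trace • ρ := by
    rw [map_sum, trace_sum, Finset.sum_smul]
    exact Finset.sum_congr rfl fun i hi => hRec i (Finset.mem_compl.mp hi)
  rw [← Finset.sum_compl_add_sum S, trace_add] at htotal
  rw [← Finset.sum_compl_add_sum S, map_add, hcorrected, eq_sub_of_add_eq htotal, sub_smul,
    one_smul]
  abel

theorem stmt_9_general {ι : Type*} [Fintype ι] [DecidableEq ι] (d k : ℕ)
    (M : Fin d → Matrix ι ι ℂ) (hKraus : ∑ i, (M i)ᴴ * M i = 1)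
    (ρ : Matrix ι ι ℂ) (hρ : ρ.PosSemidef) (hρ1 : ρ.trace = 1)
    (R : Matrix ι ι ℂ →ₗ[ℂ] Matrix ι ι ℂ)
    (hRtr : ∀ X : Matrix ι ι ℂ, (R X).trace = X.trace)
    (hRpos : ∀ X : Matrix ι ι ℂ, X.PosSemidef → (R X).PosSemidef)
    (hRec : ∀ i : Fin d, (i : ℕ) < k →
      R (M i * ρ * (M i)ᴴ) = (M i * ρ * (M i)ᴴ).trace • ρ) :
    (1 / 2) * traceNorm (R (∑ i, M i * ρ * (M i)ᴴ) - ρ) ≤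
      opNorm (∑ i ∈ Finset.univ.filter (fun i : Fin d => k ≤ (i : ℕ)),
        (M i)ᴴ * M i) := by
  set S := Finset.univ.filter (fun i : Fin d => k ≤ (i : ℕ))
  rw [recover_sum_conj_sub_eq M hKraus ρ hρ1 R S fun i hi => hRec i (by simpa [S] using hi)]
  set B := ∑ i ∈ S, M i * ρ * (M i)ᴴ
  have hB : B.PosSemidef :=
    posSemidef_sum S fun i _ => hρ.mul_mul_conjTranspose_same (M i)
  have hBρ : (B.trace • ρ).PosSemidef := hρ.smul hB.trace_nonneg
  calc (1 / 2) * traceNorm (R B - B.trace • ρ)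
      ≤ (1 / 2) * ((R B).trace.re + (B.trace • ρ).trace.re) := by
        gcongr
        exact traceNorm_sub_le (hRpos B hB) hBρ
    _ = ((∑ i ∈ S, (M i)ᴴ * M i) * ρ).trace.re := by
        rw [hRtr, trace_smul, hρ1, smul_eq_mul, mul_one, trace_conj_sum]
        ring
    _ ≤ opNorm (∑ i ∈ S, (M i)ᴴ * M i) :=
        re_trace_mul_le_opNorm
          (posSemidef_sum S fun i _ => posSemidef_conjTranspose_mul_self (M i)).1 hρ hρ1

/-- let `Φ(ρ) = Σ_{i=1}^d M_i ρ M_i†` be a quantum channel with Kraus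
operators `M_i` (so `Σ M_i† M_i = I`), and `R` a channel (linear, trace-preserving,
positive) that perfectly recovers the errors `M_i` for `i ≤ k` on the state `ρ`:
`R(M_i ρ M_i†) = Tr(M_i ρ M_i†) ρ`.  Then
`(1/2)‖(R∘Φ)(ρ) − ρ‖₁ ≤ ‖Σ_{i=k+1}^d M_i† M_i‖`. -/
theorem stmt_9 {ι : Type*} [Fintype ι] [DecidableEq ι] (d k : ℕ) (hk : k ≤ d)
    (M : Fin d → Matrix ι ι ℂ) (hKraus : ∑ i, (M i)ᴴ * M i = 1)
    (ρ : Matrix ι ι ℂ) (hρ : ρ.PosSemidef) (hρ1 : ρ.trace = 1)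
    (R : Matrix ι ι ℂ →ₗ[ℂ] Matrix ι ι ℂ)
    (hRtr : ∀ X : Matrix ι ι ℂ, (R X).trace = X.trace)
    (hRpos : ∀ X : Matrix ι ι ℂ, X.PosSemidef → (R X).PosSemidef)
    (hRec : ∀ i : Fin d, (i : ℕ) < k →
      R (M i * ρ * (M i)ᴴ) = (M i * ρ * (M i)ᴴ).trace • ρ) :
    (1 / 2) * traceNorm (R (∑ i, M i * ρ * (M i)ᴴ) - ρ) ≤
      opNorm (∑ i ∈ Finset.univ.filter (fun i : Fin d => k ≤ (i : ℕ)),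
        (M i)ᴴ * M i) :=
  stmt_9_general d k M hKraus ρ hρ hρ1 R hRtr hRpos hRec
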